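/- (Cannon) Let G be a group generated by a finite symmetric set S with 1 ∉ S, and suppose G has finitely many cone types, i.e. the set {cone(g) : g ∈ G} is finite. Then the language of all geodesic words over S is regular. -/
import Mathlib


open scoped ENNReal Pointwise

noncomputable section

/-- Word length of `g` with respect to a generating set `S`. -/
def wordLength (G : Type) [Group G] (S : Set G) (g : G) : ℕ :=
  sInf {n | ∃ l : List G, (∀ x ∈ l, x ∈ S) ∧ l.length = n ∧ l.prod = g}

/-- Word metric: `d(g,h) = ℓ(g⁻¹h)`. -/
def wordDist (G : Type) [Group G] (S : Set G) (g h : G) : ℕ :=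
  wordLength G S (g⁻¹ * h)

/-- The element of `G` represented by a word over the alphabet `S`. -/
def wordProd {G : Type} [Group G] {S : Set G} (w : List ↥S) : G :=
  (w.map Subtype.val).prod

/-- `w(i)`: the element of `G` represented by the prefix of length `i`. -/
def wordPrefix {G : Type} [Group G] {S : Set G} (w : List ↥S) (i : ℕ) : G :=
  ((w.take i).map Subtype.val).prod

/-- A word over `S` is geodesic if its length equals the word length of the
element it represents. -/
def IsGeodesicWord {G : Type} [Group G] (S : Set G) (w : List ↥S) : Prop :=
  wordLength G S (wordProd w) = w.length

/-- The cone type of `g`. -/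
def coneType (G : Type) [Group G] (S : Set G) (g : G) : Set G :=
  {h | wordLength G S (g * h) = wordLength G S g + wordLength G S h}

/-- A language over the alphabet `α` is regular if it is accepted by a finite
state automaton. -/
def IsRegularLanguage {α : Type} (L : Set (List α)) : Prop :=
  ∃ (σ : Type) (_ : Fintype σ) (M : DFA α σ), ∀ w, w ∈ M.accepts ↔ w ∈ L

/-- `w` is the lexicographically first geodesic word (with respect to the order
`r` on the alphabet) representing `g`. -/
def IsLexFirstGeodesic {G : Type} [Group G] (S : Set G) (r : ↥S → ↥S → Prop)
    (g : G) (w : List ↥S) : Prop :=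
  IsGeodesicWord S w ∧ wordProd w = g ∧
    ∀ w' : List ↥S, IsGeodesicWord S w' → wordProd w' = g → ¬ List.Lex r w' w

/-- The coset graph of a group `H` with respect to two subgroups `A`, `B`:
the bipartite graph on `H/A ⊔ H/B` where two cosets are adjacent iff they
intersect. -/
def cosetGraph (H : Type) [Group H] (A B : Subgroup H) :
    SimpleGraph ((H ⧸ A) ⊕ (H ⧸ B)) :=
  SimpleGraph.fromRel fun x y => ∃ h : H,
    x = Sum.inl (QuotientGroup.mk h) ∧ y = Sum.inr (QuotientGroup.mk h)

/-- Half the girth of a graph, as an extended nonnegative real. -/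
def halfGirth {α : Type} (Γ : SimpleGraph α) : ℝ≥0∞ :=
  (Γ.egirth : ℝ≥0∞) / 2

/-- The free product `V₁ * V₂ * V₃`. -/
abbrev FP3 (V₁ V₂ V₃ : Type) [Group V₁] [Group V₂] [Group V₃] : Type :=
  Monoid.Coprod (Monoid.Coprod V₁ V₂) V₃

variable {V₁ V₂ V₃ : Type} [Group V₁] [Group V₂] [Group V₃]

/-- The inclusion of `V₁` in the free product. -/
def inc1 : V₁ →* FP3 V₁ V₂ V₃ := Monoid.Coprod.inl.comp Monoid.Coprod.inl

/-- The inclusion of `V₂` in the free product. -/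
def inc2 : V₂ →* FP3 V₁ V₂ V₃ := Monoid.Coprod.inl.comp Monoid.Coprod.inr

/-- The inclusion of `V₃` in the free product. -/
def inc3 : V₃ →* FP3 V₁ V₂ V₃ := Monoid.Coprod.inr

/-- The defining relations `b₁b₂⁻¹`, `c₂c₃⁻¹`, `a₃a₁⁻¹` of a `k`-fold triangle
group. -/
def triRels (a₁ b₁ : V₁) (b₂ c₂ : V₂) (c₃ a₃ : V₃) : Set (FP3 V₁ V₂ V₃) :=
  {inc1 b₁ * (inc2 b₂)⁻¹, inc2 c₂ * (inc3 c₃)⁻¹, inc3 a₃ * (inc1 a₁)⁻¹}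

/-- The `k`-fold triangle group: the quotient of the free product of the three
vertex groups by the normal closure of the edge identifications. -/
abbrev TriGroup (a₁ b₁ : V₁) (b₂ c₂ : V₂) (c₃ a₃ : V₃) : Type :=
  FP3 V₁ V₂ V₃ ⧸ Subgroup.normalClosure (triRels a₁ b₁ b₂ c₂ c₃ a₃)

/-- The quotient projection from the free product onto the `k`-fold triangle
group. -/
def triMk (a₁ b₁ : V₁) (b₂ c₂ : V₂) (c₃ a₃ : V₃) :
    FP3 V₁ V₂ V₃ →* TriGroup a₁ b₁ b₂ c₂ c₃ a₃ :=
  QuotientGroup.mk' _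

/-- The symmetric generating set `S`: the images in `G` of the nonidentity
powers of `a₁`, `b₁`, `c₂`. -/
def triGen (a₁ b₁ : V₁) (b₂ c₂ : V₂) (c₃ a₃ : V₃) (k : ℕ) :
    Set (TriGroup a₁ b₁ b₂ c₂ c₃ a₃) :=
  {x | ∃ m : ℕ, 0 < m ∧ m < k ∧
    (x = triMk a₁ b₁ b₂ c₂ c₃ a₃ (inc1 (a₁ ^ m)) ∨
     x = triMk a₁ b₁ b₂ c₂ c₃ a₃ (inc1 (b₁ ^ m)) ∨
     x = triMk a₁ b₁ b₂ c₂ c₃ a₃ (inc2 (c₂ ^ m)))}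

/-- Non-positive curvature: `1/r₁ + 1/r₂ + 1/r₃ ≤ 1` where `rᵢ` is half the
girth of the coset graph of the `i`-th vertex group with respect to its two
edge subgroups. -/
def NonPosCurved (a₁ b₁ : V₁) (b₂ c₂ : V₂) (c₃ a₃ : V₃) : Prop :=
  (halfGirth (cosetGraph V₁ (Subgroup.zpowers a₁) (Subgroup.zpowers b₁)))⁻¹ +
  (halfGirth (cosetGraph V₂ (Subgroup.zpowers b₂) (Subgroup.zpowers c₂)))⁻¹ +
  (halfGirth (cosetGraph V₃ (Subgroup.zpowers c₃) (Subgroup.zpowers a₃)))⁻¹ ≤ 1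

/-- The image of the `i`-th vertex group in the triangle group, `i = 1`. -/
def triVbar1 (a₁ b₁ : V₁) (b₂ c₂ : V₂) (c₃ a₃ : V₃) :
    Subgroup (TriGroup a₁ b₁ b₂ c₂ c₃ a₃) :=
  ((triMk a₁ b₁ b₂ c₂ c₃ a₃).comp inc1).range

/-- The image of the `i`-th vertex group in the triangle group, `i = 2`. -/
def triVbar2 (a₁ b₁ : V₁) (b₂ c₂ : V₂) (c₃ a₃ : V₃) :
    Subgroup (TriGroup a₁ b₁ b₂ c₂ c₃ a₃) :=
  ((triMk a₁ b₁ b₂ c₂ c₃ a₃).comp inc2).range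

/-- The image of the `i`-th vertex group in the triangle group, `i = 3`. -/
def triVbar3 (a₁ b₁ : V₁) (b₂ c₂ : V₂) (c₃ a₃ : V₃) :
    Subgroup (TriGroup a₁ b₁ b₂ c₂ c₃ a₃) :=
  ((triMk a₁ b₁ b₂ c₂ c₃ a₃).comp inc3).range

/-- `C` is a left coset of the image of one of the three vertex groups. -/
def IsVertexCoset (a₁ b₁ : V₁) (b₂ c₂ : V₂) (c₃ a₃ : V₃)
    (C : Set (TriGroup a₁ b₁ b₂ c₂ c₃ a₃)) : Prop :=
  ∃ h : TriGroup a₁ b₁ b₂ c₂ c₃ a₃,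
    C = h • (triVbar1 a₁ b₁ b₂ c₂ c₃ a₃ : Set (TriGroup a₁ b₁ b₂ c₂ c₃ a₃)) ∨
    C = h • (triVbar2 a₁ b₁ b₂ c₂ c₃ a₃ : Set (TriGroup a₁ b₁ b₂ c₂ c₃ a₃)) ∨
    C = h • (triVbar3 a₁ b₁ b₂ c₂ c₃ a₃ : Set (TriGroup a₁ b₁ b₂ c₂ c₃ a₃))

/-- The link graph `L*(C)` on a left coset `C`: two elements of `C` are
adjacent iff they differ by right multiplication by a generator. -/
def linkGraph (G : Type) [Group G] (S : Set G) (C : Set G) : SimpleGraph ↥C :=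
  SimpleGraph.fromRel fun x y => (x : G)⁻¹ * (y : G) ∈ S

/-- Graph distance in the link graph `L*(C)`. -/
def linkDist (G : Type) [Group G] (S : Set G) (C : Set G) (c c' : ↥C) : ℕ :=
  (linkGraph G S C).dist c c'

end

namespace CannonAux

variable {G : Type} [Group G] {S : Set G}

lemma wl_le_list (l : List G) (hl : ∀ x ∈ l, x ∈ S) :
    wordLength G S l.prod ≤ l.length :=
  Nat.sInf_le ⟨l, hl, rfl, rfl⟩

lemma wl_nonempty (hsymm : ∀ s ∈ S, s⁻¹ ∈ S) (hgen : Subgroup.closure S = (⊤ : Subgroup G))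
    (g : G) :
    {n | ∃ l : List G, (∀ x ∈ l, x ∈ S) ∧ l.length = n ∧ l.prod = g}.Nonempty := by
  have hg : g ∈ (Subgroup.closure S).toSubmonoid := by
    rw [hgen]; trivial
  rw [Subgroup.closure_toSubmonoid] at hg
  obtain ⟨l, hl, hprod⟩ := Submonoid.exists_list_of_mem_closure hg
  refine ⟨l.length, l, fun x hx => ?_, rfl, hprod⟩
  rcases hl x hx with h | h
  · exact h
  · have := hsymm _ (Set.mem_inv.mp h)
    simpa using this

lemma wl_mul_le (hsymm : ∀ s ∈ S, s⁻¹ ∈ S) (hgen : Subgroup.closure S = (⊤ : Subgroup G))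
    (g h : G) :
    wordLength G S (g * h) ≤ wordLength G S g + wordLength G S h := by
  obtain ⟨l₁, hm1, hlen1, hp1⟩ := Nat.sInf_mem (wl_nonempty hsymm hgen g)
  obtain ⟨l₂, hm2, hlen2, hp2⟩ := Nat.sInf_mem (wl_nonempty hsymm hgen h)
  have := wl_le_list (S := S) (l₁ ++ l₂) (by
    intro x hx
    rcases List.mem_append.mp hx with h' | h'
    · exact hm1 x h'
    · exact hm2 x h')
  simpa [List.prod_append, hp1, hp2, hlen1, hlen2, wordLength] using this

lemma wl_gen (hone : (1 : G) ∉ S) {s : G} (hs : s ∈ S) : wordLength G S s = 1 := by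
  have hle : wordLength G S s ≤ 1 := by
    have := wl_le_list (S := S) [s] (by simpa using hs)
    simpa using this
  have hne : wordLength G S s ≠ 0 := by
    intro h0
    have hnonempty : {n | ∃ l : List G, (∀ x ∈ l, x ∈ S) ∧ l.length = n ∧ l.prod = s}.Nonempty :=
      ⟨1, [s], by simpa using hs, by simp, by simp⟩
    have hmem := Nat.sInf_mem hnonempty
    have h0' : sInf {n | ∃ l : List G, (∀ x ∈ l, x ∈ S) ∧ l.length = n ∧ l.prod = s} = 0 := h0
    rw [h0'] at hmem
    obtain ⟨l, _, hlen, hp⟩ := hmem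
    rw [List.length_eq_zero_iff] at hlen
    subst hlen
    simp at hp
    exact hone (hp ▸ hs)
  omega

lemma wl_one : wordLength G S (1 : G) = 0 :=
  Nat.le_zero.mp (Nat.sInf_le ⟨[], by simp, by simp, by simp⟩)

lemma nextSet_eq_cone (hsymm : ∀ s ∈ S, s⁻¹ ∈ S) (hone : (1 : G) ∉ S)
    (hgen : Subgroup.closure S = (⊤ : Subgroup G)) {g s : G} (hs : s ∈ S)
    (hmem : s ∈ coneType G S g) :
    {h : G | s * h ∈ coneType G S g ∧ wordLength G S (s * h) = 1 + wordLength G S h}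
      = coneType G S (g * s) := by
  have hgs : wordLength G S (g * s) = wordLength G S g + 1 := by
    have h1 : wordLength G S (g * s) = wordLength G S g + wordLength G S s := hmem
    rw [h1, wl_gen hone hs]
  ext h
  simp only [Set.mem_setOf_eq, coneType]
  constructor
  · rintro ⟨h1, h2⟩
    have h1' : wordLength G S (g * (s * h)) = wordLength G S g + wordLength G S (s * h) := h1
    rw [← mul_assoc] at h1'
    rw [h1', h2, hgs]
    omega
  · intro h1
    have key : wordLength G S (g * (s * h))
        = wordLength G S g + 1 + wordLength G S h := by
      rw [← mul_assoc, h1, hgs]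
    have le1 : wordLength G S (g * (s * h))
        ≤ wordLength G S g + wordLength G S (s * h) := wl_mul_le hsymm hgen _ _
    have le2 : wordLength G S (s * h) ≤ 1 + wordLength G S h := by
      have := wl_mul_le hsymm hgen s h
      rw [wl_gen hone hs] at this
      exact this
    have heq : wordLength G S (s * h) = 1 + wordLength G S h := by omega
    refine ⟨?_, heq⟩
    show wordLength G S (g * (s * h)) = wordLength G S g + wordLength G S (s * h)
    omega

lemma wordProd_append (w : List (↥S)) (s : ↥S) :
    wordProd (w ++ [s]) = wordProd w * (s : G) := by
  simp [wordProd]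

lemma geod_nil : IsGeodesicWord S ([] : List ↥S) := by
  show wordLength G S (wordProd []) = 0
  have : wordProd ([] : List ↥S) = (1 : G) := by simp [wordProd]
  rw [this, wl_one]

lemma geod_append (hsymm : ∀ s ∈ S, s⁻¹ ∈ S) (hone : (1 : G) ∉ S)
    (hgen : Subgroup.closure S = (⊤ : Subgroup G)) (w : List ↥S) (s : ↥S) :
    IsGeodesicWord S (w ++ [s]) ↔
      IsGeodesicWord S w ∧ (s : G) ∈ coneType G S (wordProd w) := by
  have hs1 : wordLength G S (s : G) = 1 := wl_gen hone s.2
  have hle : wordLength G S (wordProd w) ≤ w.length := by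
    have := wl_le_list (S := S) (w.map Subtype.val) (by
      intro x hx
      obtain ⟨y, _, rfl⟩ := List.mem_map.mp hx
      exact y.2)
    simpa [wordProd] using this
  have hsub : wordLength G S (wordProd w * (s : G))
      ≤ wordLength G S (wordProd w) + wordLength G S (s : G) := wl_mul_le hsymm hgen _ _
  unfold IsGeodesicWord
  rw [wordProd_append, List.length_append]
  simp only [coneType, Set.mem_setOf_eq, List.length_singleton]
  omega

end CannonAux

open CannonAux in
/-- **Cannon.** A group with finitely many cone types has a
regular language of all geodesic words. -/
theorem cannon_geodesic_language_regular (G : Type) [Group G] (S : Set G)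
    (hfin : S.Finite) (hsymm : ∀ s ∈ S, s⁻¹ ∈ S) (hone : (1 : G) ∉ S)
    (hgen : Subgroup.closure S = (⊤ : Subgroup G))
    (hcone : {C : Set G | ∃ g : G, C = coneType G S g}.Finite) :
    IsRegularLanguage {w : List ↥S | IsGeodesicWord S w} := by
  classical
  have memc : ∀ g : G, coneType G S g ∈ hcone.toFinset := fun g =>
    hcone.mem_toFinset.mpr ⟨g, rfl⟩
  set σ' := {C : Set G // C ∈ hcone.toFinset} with hσ
  let stateOf : G → σ' := fun g => ⟨coneType G S g, memc g⟩
  have hnext : ∀ (C : σ') (s : ↥S), (s : G) ∈ C.1 →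
      {h : G | (s : G) * h ∈ C.1 ∧ wordLength G S ((s : G) * h) = 1 + wordLength G S h}
        ∈ hcone.toFinset := by
    intro C s hsC
    obtain ⟨g, hg⟩ := hcone.mem_toFinset.mp C.2
    rw [hg] at hsC
    rw [hg]
    rw [nextSet_eq_cone hsymm hone hgen s.2 hsC]
    exact memc _
  let M : DFA ↥S (Option σ') :=
    { step := fun st s => st.bind fun C =>
        if h : (s : G) ∈ C.1 then some ⟨_, hnext C s h⟩ else none
      start := some (stateOf 1)
      accept := {st | st.isSome} }
  refine ⟨Option σ', inferInstance, M, ?_⟩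
  have key : ∀ w : List ↥S,
      M.eval w = if IsGeodesicWord S w then some (stateOf (wordProd w)) else none := by
    intro w
    induction w using List.reverseRecOn with
    | nil =>
        rw [if_pos geod_nil]
        rfl
    | append_singleton w s ih =>
        rw [DFA.eval_append_singleton, ih]
        by_cases hw : IsGeodesicWord S w
        · rw [if_pos hw]
          by_cases hc : (s : G) ∈ coneType G S (wordProd w)
          · have hgeo2 : IsGeodesicWord S (w ++ [s]) :=
              (geod_append hsymm hone hgen w s).mpr ⟨hw, hc⟩
            rw [if_pos hgeo2]
            show (if h : (s : G) ∈ (stateOf (wordProd w)).1 then _ else none)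
              = some (stateOf (wordProd (w ++ [s])))
            rw [dif_pos hc]
            refine congrArg some (Subtype.ext ?_)
            show {h : G | (s : G) * h ∈ coneType G S (wordProd w) ∧ _}
              = coneType G S (wordProd (w ++ [s]))
            rw [wordProd_append]
            exact nextSet_eq_cone hsymm hone hgen s.2 hc
          · have : ¬ IsGeodesicWord S (w ++ [s]) := by
              rw [geod_append hsymm hone hgen w s]
              tauto
            rw [if_neg this]
            show (if h : (s : G) ∈ (stateOf (wordProd w)).1 then _ else none) = none
            rw [dif_neg hc]
        · rw [if_neg hw]
          have : ¬ IsGeodesicWord S (w ++ [s]) := by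
            rw [geod_append hsymm hone hgen w s]
            tauto
          rw [if_neg this]
          rfl
  intro w
  rw [DFA.mem_accepts]
  show (M.eval w).isSome = true ↔ _
  rw [key w]
  by_cases hw : IsGeodesicWord S w
  · simp [hw]
  · simp [hw]
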